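/- If (u¹, a¹, u², a²) is a smooth solution of the augmented system i curl u² + i∇a² − k u¹ = f¹, −i div u² − k a¹ = h¹, −i curl u¹ − i∇a¹ − k u² = f², i div u¹ − k a² = h² on a domain G ⊆ ℝ³ with k ≠ 0, and the right-hand side satisfies the compatibility conditions div f¹ − i k h² = 0 and div f² + i k h¹ = 0 in G, then a¹ and a² satisfy the Helmholtz equations Δa¹ + k² a¹ = 0 and Δa² + k² a² = 0 in G. -/

import Mathlib

noncomputable def pd3 (i : Fin 3) (f : (Fin 3 → ℝ) → ℂ) (x : Fin 3 → ℝ) : ℂ :=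
  fderiv ℝ f x (Pi.single i 1)

noncomputable def curl3 (F : (Fin 3 → ℝ) → Fin 3 → ℂ) (x : Fin 3 → ℝ) : Fin 3 → ℂ :=
  ![pd3 1 (fun y => F y 2) x - pd3 2 (fun y => F y 1) x,
    pd3 2 (fun y => F y 0) x - pd3 0 (fun y => F y 2) x,
    pd3 0 (fun y => F y 1) x - pd3 1 (fun y => F y 0) x]

noncomputable def div3 (F : (Fin 3 → ℝ) → Fin 3 → ℂ) (x : Fin 3 → ℝ) : ℂ :=
  pd3 0 (fun y => F y 0) x + pd3 1 (fun y => F y 1) x + pd3 2 (fun y => F y 2) x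

noncomputable def grad3 (f : (Fin 3 → ℝ) → ℂ) (x : Fin 3 → ℝ) : Fin 3 → ℂ :=
  ![pd3 0 f x, pd3 1 f x, pd3 2 f x]

noncomputable def lap3 (f : (Fin 3 → ℝ) → ℂ) (x : Fin 3 → ℝ) : ℂ :=
  pd3 0 (pd3 0 f) x + pd3 1 (pd3 1 f) x + pd3 2 (pd3 2 f) x

/-! Taking the divergence of `c curl u + c ∇a - k v = f` and using `div curl = 0` (symmetry of
second derivatives) and `div ∇ = Δ` gives `div f = c Δa - k div v`. Substituting
`h = c div v - k a` into the compatibility condition `div f - c k h = 0`, the `div v` terms cancel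
because `c² = -1`, leaving `c (Δa + k² a) = 0`. The two halves of the augmented system have this
shape with `c = -i` and `c = i`. -/

open Filter Topology
open scoped ContDiff

section PartialDerivatives

variable {x : Fin 3 → ℝ}

theorem pd3_congr_of_eventuallyEq {f g : (Fin 3 → ℝ) → ℂ} (hfg : f =ᶠ[𝓝 x] g) (i : Fin 3) :
    pd3 i f x = pd3 i g x := by
  rw [pd3, pd3, hfg.fderiv_eq]

theorem pd3_add {f g : (Fin 3 → ℝ) → ℂ} (hf : DifferentiableAt ℝ f x)
    (hg : DifferentiableAt ℝ g x) (i : Fin 3) :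
    pd3 i (fun y => f y + g y) x = pd3 i f x + pd3 i g x := by
  simp [pd3, fderiv_fun_add hf hg]

theorem pd3_sub {f g : (Fin 3 → ℝ) → ℂ} (hf : DifferentiableAt ℝ f x)
    (hg : DifferentiableAt ℝ g x) (i : Fin 3) :
    pd3 i (fun y => f y - g y) x = pd3 i f x - pd3 i g x := by
  simp [pd3, fderiv_fun_sub hf hg]

theorem pd3_const_mul {f : (Fin 3 → ℝ) → ℂ} (hf : DifferentiableAt ℝ f x) (c : ℂ) (i : Fin 3) :
    pd3 i (fun y => c * f y) x = c * pd3 i f x := by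
  simp [pd3, fderiv_const_mul hf]

theorem ContDiffAt.pd3 {n : ℕ∞ω} {f : (Fin 3 → ℝ) → ℂ} (hf : ContDiffAt ℝ (n + 1) f x)
    (i : Fin 3) : ContDiffAt ℝ n (pd3 i f) x :=
  hf.fderiv_right_succ.clm_apply contDiffAt_const

theorem pd3_pd3_comm {f : (Fin 3 → ℝ) → ℂ} (hf : ContDiffAt ℝ 2 f x) (i j : Fin 3) :
    pd3 i (pd3 j f) x = pd3 j (pd3 i f) x := by
  have hdf : DifferentiableAt ℝ (fderiv ℝ f) x :=
    (hf.fderiv_right_succ (n := 1)).differentiableAt one_ne_zero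
  have hsnd (j : Fin 3) (w : Fin 3 → ℝ) :
      fderiv ℝ (pd3 j f) x w = fderiv ℝ (fderiv ℝ f) x w (Pi.single j 1) := by
    change fderiv ℝ (fun y => fderiv ℝ f y (Pi.single j 1)) x w = _
    simp [fderiv_clm_apply hdf (differentiableAt_const _)]
  rw [_root_.pd3, _root_.pd3, hsnd, hsnd]
  exact (hf.isSymmSndFDerivAt (by simp)).eq _ _

end PartialDerivatives

section VectorCalculus

variable {x : Fin 3 → ℝ}

theorem ContDiffAt.grad3 {n : ℕ∞ω} {f : (Fin 3 → ℝ) → ℂ} (hf : ContDiffAt ℝ (n + 1) f x) :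
    ContDiffAt ℝ n (grad3 f) x := by
  refine contDiffAt_pi.2 fun j => ?_
  fin_cases j <;> exact hf.pd3 _

theorem ContDiffAt.curl3 {n : ℕ∞ω} {u : (Fin 3 → ℝ) → Fin 3 → ℂ}
    (hu : ContDiffAt ℝ (n + 1) u x) : ContDiffAt ℝ n (curl3 u) x := by
  have hu' (j : Fin 3) : ContDiffAt ℝ (n + 1) (fun y => u y j) x := contDiffAt_pi.1 hu j
  refine contDiffAt_pi.2 fun j => ?_
  fin_cases j <;> exact ((hu' _).pd3 _).sub ((hu' _).pd3 _)

theorem div3_congr_of_eventuallyEq {F H : (Fin 3 → ℝ) → Fin 3 → ℂ} (hFH : F =ᶠ[𝓝 x] H) :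
    div3 F x = div3 H x := by
  have hFH' (j : Fin 3) : (fun y => F y j) =ᶠ[𝓝 x] fun y => H y j :=
    hFH.mono fun y hy => congrFun hy j
  simp only [div3, pd3_congr_of_eventuallyEq (hFH' _)]

theorem div3_add {F H : (Fin 3 → ℝ) → Fin 3 → ℂ} (hF : DifferentiableAt ℝ F x)
    (hH : DifferentiableAt ℝ H x) : div3 (F + H) x = div3 F x + div3 H x := by
  simp only [div3, Pi.add_apply, pd3_add (differentiableAt_pi.1 hF _) (differentiableAt_pi.1 hH _)]
  ring

theorem div3_sub {F H : (Fin 3 → ℝ) → Fin 3 → ℂ} (hF : DifferentiableAt ℝ F x)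
    (hH : DifferentiableAt ℝ H x) : div3 (F - H) x = div3 F x - div3 H x := by
  simp only [div3, Pi.sub_apply, pd3_sub (differentiableAt_pi.1 hF _) (differentiableAt_pi.1 hH _)]
  ring

theorem div3_const_smul {F : (Fin 3 → ℝ) → Fin 3 → ℂ} (hF : DifferentiableAt ℝ F x) (c : ℂ) :
    div3 (c • F) x = c * div3 F x := by
  simp only [div3, Pi.smul_apply, smul_eq_mul, pd3_const_mul (differentiableAt_pi.1 hF _)]
  ring

theorem div3_curl3_eq_zero {u : (Fin 3 → ℝ) → Fin 3 → ℂ} (hu : ContDiffAt ℝ 2 u x) :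
    div3 (curl3 u) x = 0 := by
  have hu' (j : Fin 3) : ContDiffAt ℝ 2 (fun y => u y j) x := contDiffAt_pi.1 hu j
  have hsub (i a b c d : Fin 3) :
      pd3 i (fun y => pd3 a (fun z => u z b) y - pd3 c (fun z => u z d) y) x
        = pd3 i (pd3 a fun z => u z b) x - pd3 i (pd3 c fun z => u z d) x :=
    pd3_sub (((hu' b).pd3 (n := 1) a).differentiableAt one_ne_zero)
      (((hu' d).pd3 (n := 1) c).differentiableAt one_ne_zero) i
  simp only [div3, curl3, Matrix.cons_val_zero, Matrix.cons_val_one, Matrix.cons_val_two,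
    Matrix.head_cons, Matrix.tail_cons]
  rw [hsub, hsub, hsub, pd3_pd3_comm (hu' 2) 0 1, pd3_pd3_comm (hu' 1) 0 2,
    pd3_pd3_comm (hu' 0) 1 2]
  ring

theorem div3_grad3 (f : (Fin 3 → ℝ) → ℂ) : div3 (grad3 f) = lap3 f := rfl

end VectorCalculus

theorem lap3_add_sq_mul_eq_zero_of_system {u v f : (Fin 3 → ℝ) → Fin 3 → ℂ}
    {a h : (Fin 3 → ℝ) → ℂ} {x : Fin 3 → ℝ} {c k : ℂ} (hc : c ^ 2 = -1)
    (hu : ContDiffAt ℝ 2 u x) (hv : DifferentiableAt ℝ v x) (ha : ContDiffAt ℝ 2 a x)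
    (hf : ∀ᶠ y in 𝓝 x, ∀ j, c * curl3 u y j + c * grad3 a y j - k * v y j = f y j)
    (hh : c * div3 v x - k * a x = h x) (hcompat : div3 f x - c * k * h x = 0) :
    lap3 a x + k ^ 2 * a x = 0 := by
  have hf' : f =ᶠ[𝓝 x] c • curl3 u + c • grad3 a - k • v := by
    filter_upwards [hf] with y hy
    funext j
    simp [← hy j]
  have hcurl : DifferentiableAt ℝ (curl3 u) x := (hu.curl3 (n := 1)).differentiableAt one_ne_zero
  have hgrad : DifferentiableAt ℝ (grad3 a) x := (ha.grad3 (n := 1)).differentiableAt one_ne_zero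
  have hdiv : div3 f x = c * lap3 a x - k * div3 v x := by
    rw [div3_congr_of_eventuallyEq hf', div3_sub ((hcurl.const_smul c).add (hgrad.const_smul c))
      (hv.const_smul k), div3_add (hcurl.const_smul c) (hgrad.const_smul c),
      div3_const_smul hcurl, div3_const_smul hgrad, div3_const_smul hv, div3_curl3_eq_zero hu,
      div3_grad3]
    ring
  have hc0 : c ≠ 0 := by rintro rfl; norm_num at hc
  refine (mul_eq_zero.1 ?_).resolve_left hc0
  linear_combination hcompat - hdiv - c * k * hh + k * div3 v x * hc

theorem augmented_system_scalars_helmholtz_general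
    (G : Set (Fin 3 → ℝ)) (hG : IsOpen G) (k : ℝ)
    (u1 u2 f1 f2 : (Fin 3 → ℝ) → Fin 3 → ℂ) (a1 a2 h1 h2 : (Fin 3 → ℝ) → ℂ)
    (hu1 : ContDiffOn ℝ (⊤ : ℕ∞) u1 G) (hu2 : ContDiffOn ℝ (⊤ : ℕ∞) u2 G)
    (ha1 : ContDiffOn ℝ (⊤ : ℕ∞) a1 G) (ha2 : ContDiffOn ℝ (⊤ : ℕ∞) a2 G)
    (e1 : ∀ x ∈ G, ∀ j, Complex.I * curl3 u2 x j + Complex.I * grad3 a2 x j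
        - (k : ℂ) * u1 x j = f1 x j)
    (e2 : ∀ x ∈ G, -Complex.I * div3 u2 x - (k : ℂ) * a1 x = h1 x)
    (e3 : ∀ x ∈ G, ∀ j, -Complex.I * curl3 u1 x j - Complex.I * grad3 a1 x j
        - (k : ℂ) * u2 x j = f2 x j)
    (e4 : ∀ x ∈ G, Complex.I * div3 u1 x - (k : ℂ) * a2 x = h2 x)
    -- compatibility conditions:
    (cc1 : ∀ x ∈ G, div3 f1 x - Complex.I * (k : ℂ) * h2 x = 0)
    (cc2 : ∀ x ∈ G, div3 f2 x + Complex.I * (k : ℂ) * h1 x = 0) :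
    ∀ x ∈ G,
      lap3 a1 x + (k : ℂ) ^ 2 * a1 x = 0 ∧
      lap3 a2 x + (k : ℂ) ^ 2 * a2 x = 0 := by
  intro x hx
  have hxG : G ∈ 𝓝 x := hG.mem_nhds hx
  have hu1x : ContDiffAt ℝ 2 u1 x := (hu1.contDiffAt hxG).of_le (by norm_cast)
  have hu2x : ContDiffAt ℝ 2 u2 x := (hu2.contDiffAt hxG).of_le (by norm_cast)
  have ha1x : ContDiffAt ℝ 2 a1 x := (ha1.contDiffAt hxG).of_le (by norm_cast)
  have ha2x : ContDiffAt ℝ 2 a2 x := (ha2.contDiffAt hxG).of_le (by norm_cast)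
  constructor
  · exact lap3_add_sq_mul_eq_zero_of_system (c := -Complex.I) (f := f2) (by simp) hu1x
      (hu2x.differentiableAt two_ne_zero) ha1x
      (eventually_of_mem hxG fun y hy j => by linear_combination e3 y hy j) (e2 x hx)
      (by linear_combination cc2 x hx)
  · exact lap3_add_sq_mul_eq_zero_of_system (by simp) hu2x (hu1x.differentiableAt two_ne_zero)
      ha2x (eventually_of_mem hxG e1) (e4 x hx) (cc1 x hx)

/-- interior part of Proposition 3.1: for solutions of the
augmented system with compatible right-hand side, the auxiliary scalars a¹, a²
satisfy Helmholtz equations. -/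
theorem augmented_system_scalars_helmholtz
    (G : Set (Fin 3 → ℝ)) (hG : IsOpen G) (k : ℝ) (hk : k ≠ 0)
    (u1 u2 f1 f2 : (Fin 3 → ℝ) → Fin 3 → ℂ) (a1 a2 h1 h2 : (Fin 3 → ℝ) → ℂ)
    (hu1 : ContDiffOn ℝ (⊤ : ℕ∞) u1 G) (hu2 : ContDiffOn ℝ (⊤ : ℕ∞) u2 G)
    (ha1 : ContDiffOn ℝ (⊤ : ℕ∞) a1 G) (ha2 : ContDiffOn ℝ (⊤ : ℕ∞) a2 G)
    (e1 : ∀ x ∈ G, ∀ j, Complex.I * curl3 u2 x j + Complex.I * grad3 a2 x j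
        - (k : ℂ) * u1 x j = f1 x j)
    (e2 : ∀ x ∈ G, -Complex.I * div3 u2 x - (k : ℂ) * a1 x = h1 x)
    (e3 : ∀ x ∈ G, ∀ j, -Complex.I * curl3 u1 x j - Complex.I * grad3 a1 x j
        - (k : ℂ) * u2 x j = f2 x j)
    (e4 : ∀ x ∈ G, Complex.I * div3 u1 x - (k : ℂ) * a2 x = h2 x)
    -- compatibility conditions:
    (cc1 : ∀ x ∈ G, div3 f1 x - Complex.I * (k : ℂ) * h2 x = 0)
    (cc2 : ∀ x ∈ G, div3 f2 x + Complex.I * (k : ℂ) * h1 x = 0) :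
    ∀ x ∈ G,
      lap3 a1 x + (k : ℂ) ^ 2 * a1 x = 0 ∧
      lap3 a2 x + (k : ℂ) ^ 2 * a2 x = 0 :=
  augmented_system_scalars_helmholtz_general G hG k u1 u2 f1 f2 a1 a2 h1 h2 hu1 hu2 ha1 ha2 e1 e2 e3
    e4 cc1 cc2
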